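/- Let ρ be a density matrix and A a Hermitian operator on ℂ^n with eigenvalues a_k and orthonormal eigenvectors |a_k⟩, and write ρ_{kl} = ⟨a_k| ρ |a_l⟩. Then for every collection P of pairwise-disjoint pairs (k,l) of indices from {1,…,n}, the trace norm of the commutator satisfies ‖[ρ, A]‖₁ ≥ 2 Σ_{(k,l)∈P} |a_k − a_l| · |ρ_{kl}|; in particular ‖[ρ, A]‖₁ ≥ 2 max_{k,l} |a_k − a_l| · |ρ_{kl}|. -/

import Mathlib

/-!
The commutator `C = ρA − Aρ` is skew-Hermitian, so `iC` is Hermitian, say with eigenvalues `μ_j`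
and orthonormal eigenvectors `u_j`; as `CᴴC = (iC)²`, `‖C‖₁ = ∑ |μ_j|`. In the eigenbasis of `A`,
`|⟨a_k|C|a_l⟩| = |a_k − a_l| |ρ_{kl}|`, while the spectral expansion of `iC` and AM–GM give
`2 |⟨x|C|y⟩| ≤ ∑_j |μ_j| (|⟨x|u_j⟩|² + |⟨y|u_j⟩|²)`. Summed over disjoint pairs `(k, l)`, the
weight of each `|μ_j|` is at most `‖u_j‖² = 1` by Bessel's inequality.
-/

open MeasureTheory Matrix Filter
open scoped BigOperators Kronecker InnerProductSpace ComplexOrder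

noncomputable section

namespace PQSM

variable {n : Type*} [Fintype n] [DecidableEq n]

instance : MeasurableSpace (EuclideanSpace ℂ n) := MeasurableSpace.comap WithLp.ofLp MeasurableSpace.pi

/-- The outer product (pure state density matrix) `|u⟩⟨u|` of a vector with itself. -/
def outer (u : EuclideanSpace ℂ n) : Matrix n n ℂ :=
  fun i j => u i * (starRingEnd ℂ) (u j)

/-- Operator norm of a matrix acting on Euclidean space. -/
def opNorm (A : Matrix n n ℂ) : ℝ := ‖Matrix.toEuclideanCLM (𝕜 := ℂ) A‖

/-- Trace norm `Tr √(AᴴA)`. -/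
def traceNorm (A : Matrix n n ℂ) : ℝ :=
  (((Matrix.posSemidef_conjTranspose_mul_self A).1.eigenvectorUnitary.1 *
    diagonal (((↑) : ℝ → ℂ) ∘ (√·) ∘ (Matrix.posSemidef_conjTranspose_mul_self A).1.eigenvalues) *
    (star (Matrix.posSemidef_conjTranspose_mul_self A).1.eigenvectorUnitary : Matrix n n ℂ)).trace).re

/-- Trace distance `½‖ρ − σ‖₁`. -/
def traceDist (ρ σ : Matrix n n ℂ) : ℝ := traceNorm (ρ - σ) / 2

/-- Real expectation value `Re Tr[B ρ]`. -/
def expVal (B ρ : Matrix n n ℂ) : ℝ := ((B * ρ).trace).re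

/-- Purity `Tr[ρ²]`. -/
def purity (ρ : Matrix n n ℂ) : ℝ := ((ρ * ρ).trace).re

/-- Effective dimension `1/Tr[ρ²]`. -/
def dEff (ρ : Matrix n n ℂ) : ℝ := 1 / purity ρ

/-- An orthogonal projector. -/
def IsProjector (P : Matrix n n ℂ) : Prop := P.IsHermitian ∧ P * P = P

/-- A density matrix: positive semidefinite with unit trace. -/
def IsDensityMatrix (ρ : Matrix n n ℂ) : Prop := ρ.PosSemidef ∧ ρ.trace = 1

/-- The microcanonical state `Π_R/d_R` of the subspace with projector `P` of dimension `dR`. -/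
def mcState (P : Matrix n n ℂ) (dR : ℕ) : Matrix n n ℂ := ((dR : ℂ))⁻¹ • P

/-- `μ` is the uniform (rotation-invariant, Haar) probability measure on the unit sphere of the
subspace of `ℂ^n` whose orthogonal projector is `P`: `μ` is a probability measure, it is
concentrated on the unit vectors fixed by `P`, and it is invariant under every unitary of the
full space that preserves the subspace (equivalently, commutes with `P`). -/
def IsUniformOnSphere (P : Matrix n n ℂ) (μ : Measure (EuclideanSpace ℂ n)) : Prop :=
  IsProbabilityMeasure μ ∧
  (∀ᵐ u ∂μ, ‖u‖ = 1 ∧ Matrix.toEuclideanCLM (𝕜 := ℂ) P u = u) ∧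
  ∀ U ∈ Matrix.unitaryGroup n ℂ,
    U * P = P * U →
    Measure.map (fun u => Matrix.toEuclideanCLM (𝕜 := ℂ) U u) μ = μ

/-- Non-degenerate energy gaps. -/
def HasNonDegenerateGaps {H : Matrix n n ℂ} (hH : H.IsHermitian) : Prop :=
  ∀ k l m p : n, hH.eigenvalues k - hH.eigenvalues l = hH.eigenvalues m - hH.eigenvalues p →
    (k = l ∧ m = p) ∨ (k = m ∧ l = p)

/-- Dephasing `$[ρ] = Σ_k |E_k⟩⟨E_k| ρ |E_k⟩⟨E_k|` with respect to the eigenbasis of `H`. -/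
def dephase {H : Matrix n n ℂ} (hH : H.IsHermitian) (ρ : Matrix n n ℂ) : Matrix n n ℂ :=
  ∑ k, outer (hH.eigenvectorBasis k) * ρ * outer (hH.eigenvectorBasis k)

/-- Time evolution `ρ_t = e^{−iHt} ρ e^{iHt}`. -/
def evol (H : Matrix n n ℂ) (t : ℝ) (ρ : Matrix n n ℂ) : Matrix n n ℂ :=
  NormedSpace.exp ((-(Complex.I * t)) • H) * ρ * NormedSpace.exp ((Complex.I * t) • H)

variable {nS nB : Type*} [Fintype nS] [Fintype nB]

/-- Partial trace over the second (bath) tensor factor. -/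
def ptraceB (M : Matrix (nS × nB) (nS × nB) ℂ) : Matrix nS nS ℂ :=
  fun i j => ∑ b, M (i, b) (j, b)

/-- Partial trace over the first (system) tensor factor. -/
def ptraceS (M : Matrix (nS × nB) (nS × nB) ℂ) : Matrix nB nB ℂ :=
  fun i j => ∑ a, M (a, i) (a, j)

/-- Tensor product of vectors. -/
def tensorVec (u : EuclideanSpace ℂ nS) (v : EuclideanSpace ℂ nB) :
    EuclideanSpace ℂ (nS × nB) := WithLp.toLp 2 (fun p => u p.1 * v p.2)

/-- Von Neumann entropy `−Σ λ_i log λ_i` (with `0 log 0 = 0`). -/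
def vnEntropy (ρ : Matrix n n ℂ) : ℝ :=
  if h : ρ.IsHermitian then -∑ i, h.eigenvalues i * Real.log (h.eigenvalues i) else 0

/-- Quantum mutual information `I_{SB}(ρ) = S(ρ^S) + S(ρ^B) − S(ρ)`. -/
def mutualInfo [DecidableEq nS] [DecidableEq nB] (ρ : Matrix (nS × nB) (nS × nB) ℂ) : ℝ :=
  vnEntropy (ptraceB ρ) + vnEntropy (ptraceS ρ) - vnEntropy ρ

section Spectral

variable {ι κ : Type*} [Fintype ι] [DecidableEq ι]

lemma _root_.Matrix.IsHermitian.trace_cfc {H : Matrix ι ι ℂ} (hH : H.IsHermitian) (f : ℝ → ℝ) :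
    (cfc f H).trace = ∑ i, (f (hH.eigenvalues i) : ℂ) := by
  rw [hH.cfc_eq, IsHermitian.cfc, Unitary.conjStarAlgAut_apply, trace_mul_cycle,
    Unitary.star_mul_self_of_mem hH.eigenvectorUnitary.2, Matrix.one_mul, trace_diagonal]
  rfl

lemma traceNorm_eq_re_trace_cfc_sqrt (C : Matrix ι ι ℂ) :
    traceNorm C = ((cfc Real.sqrt (Cᴴ * C)).trace).re := by
  rw [(posSemidef_conjTranspose_mul_self C).1.cfc_eq, IsHermitian.cfc,
    Unitary.conjStarAlgAut_apply]
  rfl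

lemma traceNorm_eq_sum_abs_eigenvalues {C H : Matrix ι ι ℂ} (hH : H.IsHermitian)
    (hCH : Cᴴ * C = H * H) : traceNorm C = ∑ i, |hH.eigenvalues i| := by
  have hsqrt : cfc Real.sqrt (H * H) = cfc (fun x : ℝ ↦ |x|) H := by
    rw [← sq, ← cfc_pow_id (R := ℝ) H 2, ← cfc_comp' ..]
    exact cfc_congr fun x _ ↦ Real.sqrt_sq_eq_abs x
  rw [traceNorm_eq_re_trace_cfc_sqrt, hCH, hsqrt, hH.trace_cfc]
  simp

lemma _root_.Matrix.IsHermitian.inner_toEuclideanCLM_eq_sum {H : Matrix ι ι ℂ}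
    (hH : H.IsHermitian) (x y : EuclideanSpace ℂ ι) :
    ⟪x, toEuclideanCLM (𝕜 := ℂ) H y⟫_ℂ = ∑ j, (hH.eigenvalues j : ℂ) *
      (⟪x, hH.eigenvectorBasis j⟫_ℂ * ⟪hH.eigenvectorBasis j, y⟫_ℂ) := by
  conv_lhs => rw [← hH.eigenvectorBasis.sum_repr' y]
  simp only [map_sum, _root_.map_smul, inner_sum, inner_smul_right]
  refine Finset.sum_congr rfl fun j _ ↦ ?_
  have hvec : toEuclideanCLM (𝕜 := ℂ) H (hH.eigenvectorBasis j)
      = (hH.eigenvalues j : ℂ) • hH.eigenvectorBasis j := by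
    ext i
    simpa using congrFun (hH.mulVec_eigenvectorBasis j) i
  rw [hvec, inner_smul_right]
  ring

lemma _root_.Matrix.IsHermitian.two_mul_norm_inner_toEuclideanCLM_le {H : Matrix ι ι ℂ}
    (hH : H.IsHermitian) (x y : EuclideanSpace ℂ ι) :
    2 * ‖⟪x, toEuclideanCLM (𝕜 := ℂ) H y⟫_ℂ‖ ≤ ∑ j, |hH.eigenvalues j| *
      (‖⟪x, hH.eigenvectorBasis j⟫_ℂ‖ ^ 2 + ‖⟪y, hH.eigenvectorBasis j⟫_ℂ‖ ^ 2) := by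
  rw [hH.inner_toEuclideanCLM_eq_sum]
  refine (mul_le_mul_of_nonneg_left (norm_sum_le _ _) zero_le_two).trans ?_
  rw [Finset.mul_sum]
  refine Finset.sum_le_sum fun j _ ↦ ?_
  rw [norm_mul, norm_mul, Complex.norm_real, Real.norm_eq_abs,
    norm_inner_symm (hH.eigenvectorBasis j) y]
  nlinarith [abs_nonneg (hH.eigenvalues j),
    two_mul_le_add_sq ‖⟪x, hH.eigenvectorBasis j⟫_ℂ‖ ‖⟪y, hH.eigenvectorBasis j⟫_ℂ‖]

lemma pairwiseDisjoint_pair_of_ne [DecidableEq κ] {P : Finset (κ × κ)}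
    (hP : ∀ p ∈ P, ∀ q ∈ P, p ≠ q → p.1 ≠ q.1 ∧ p.1 ≠ q.2 ∧ p.2 ≠ q.1 ∧ p.2 ≠ q.2) :
    (P : Set (κ × κ)).PairwiseDisjoint fun p ↦ ({p.1, p.2} : Finset κ) := by
  intro p hp q hq hpq
  obtain ⟨h11, h12, h21, h22⟩ := hP p hp q hq hpq
  simp only [Function.onFun, Finset.disjoint_insert_left, Finset.disjoint_insert_right,
    Finset.disjoint_singleton, Finset.mem_insert, Finset.mem_singleton]
  tauto

lemma _root_.Orthonormal.sum_pairs_norm_inner_sq_le {𝕜 E : Type*} [RCLike 𝕜]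
    [NormedAddCommGroup E] [InnerProductSpace 𝕜 E] [DecidableEq κ] {v : κ → E}
    (hv : Orthonormal 𝕜 v) {P : Finset (κ × κ)} (hne : ∀ p ∈ P, p.1 ≠ p.2)
    (hdisj : (P : Set (κ × κ)).PairwiseDisjoint fun p ↦ ({p.1, p.2} : Finset κ)) (w : E) :
    ∑ p ∈ P, (‖⟪v p.1, w⟫_𝕜‖ ^ 2 + ‖⟪v p.2, w⟫_𝕜‖ ^ 2) ≤ ‖w‖ ^ 2 := by
  calc ∑ p ∈ P, (‖⟪v p.1, w⟫_𝕜‖ ^ 2 + ‖⟪v p.2, w⟫_𝕜‖ ^ 2)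
      = ∑ k ∈ P.biUnion fun p ↦ {p.1, p.2}, ‖⟪v k, w⟫_𝕜‖ ^ 2 := by
        rw [Finset.sum_biUnion hdisj]
        exact Finset.sum_congr rfl fun p hp ↦
          (Finset.sum_pair (f := fun k ↦ ‖⟪v k, w⟫_𝕜‖ ^ 2) (hne p hp)).symm
    _ ≤ ‖w‖ ^ 2 := hv.sum_inner_products_le w

lemma _root_.Matrix.IsHermitian.two_mul_sum_norm_inner_pairs_le [DecidableEq κ]
    {H : Matrix ι ι ℂ} (hH : H.IsHermitian) {v : κ → EuclideanSpace ℂ ι} (hv : Orthonormal ℂ v)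
    {P : Finset (κ × κ)} (hne : ∀ p ∈ P, p.1 ≠ p.2)
    (hdisj : (P : Set (κ × κ)).PairwiseDisjoint fun p ↦ ({p.1, p.2} : Finset κ)) :
    2 * ∑ p ∈ P, ‖⟪v p.1, toEuclideanCLM (𝕜 := ℂ) H (v p.2)⟫_ℂ‖ ≤ ∑ j, |hH.eigenvalues j| := by
  set u := hH.eigenvectorBasis
  calc 2 * ∑ p ∈ P, ‖⟪v p.1, toEuclideanCLM (𝕜 := ℂ) H (v p.2)⟫_ℂ‖
      ≤ ∑ p ∈ P, ∑ j, |hH.eigenvalues j| * (‖⟪v p.1, u j⟫_ℂ‖ ^ 2 + ‖⟪v p.2, u j⟫_ℂ‖ ^ 2) := by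
        rw [Finset.mul_sum]
        exact Finset.sum_le_sum fun p _ ↦ hH.two_mul_norm_inner_toEuclideanCLM_le _ _
    _ = ∑ j, |hH.eigenvalues j| * ∑ p ∈ P, (‖⟪v p.1, u j⟫_ℂ‖ ^ 2 + ‖⟪v p.2, u j⟫_ℂ‖ ^ 2) := by
        rw [Finset.sum_comm]
        simp only [Finset.mul_sum]
    _ ≤ ∑ j, |hH.eigenvalues j| * ‖u j‖ ^ 2 := by
        gcongr with j
        exact hv.sum_pairs_norm_inner_sq_le hne hdisj (u j)
    _ = ∑ j, |hH.eigenvalues j| := by simp [u.orthonormal.1]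

lemma inner_toEuclideanCLM_commutator_eq {A : Matrix ι ι ℂ} (hA : A.IsHermitian)
    (ρ : Matrix ι ι ℂ) {a : κ → ℝ} {v : κ → EuclideanSpace ℂ ι}
    (heig : ∀ k, toEuclideanCLM (𝕜 := ℂ) A (v k) = (a k : ℂ) • v k) (k l : κ) :
    ⟪v k, toEuclideanCLM (𝕜 := ℂ) (ρ * A - A * ρ) (v l)⟫_ℂ
      = (a l - a k : ℂ) * ⟪v k, toEuclideanCLM (𝕜 := ℂ) ρ (v l)⟫_ℂ := by
  have hAsymm : ∀ x y,
      ⟪x, toEuclideanCLM (𝕜 := ℂ) A y⟫_ℂ = ⟪toEuclideanCLM (𝕜 := ℂ) A x, y⟫_ℂ := fun x y ↦ by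
    rw [← ContinuousLinearMap.adjoint_inner_right, ← ContinuousLinearMap.star_eq_adjoint,
      ← map_star, star_eq_conjTranspose, hA.eq]
  rw [map_sub, _root_.map_mul, _root_.map_mul, _root_.sub_apply, mul_apply_eq_comp,
    mul_apply_eq_comp, heig, _root_.map_smul, inner_sub_right, inner_smul_right, hAsymm, heig,
    inner_smul_left, Complex.conj_ofReal]
  ring

end Spectral

section SkewHermitian

variable {ι : Type*}

lemma conjTranspose_commutator_of_isHermitian [Fintype ι] {ρ A : Matrix ι ι ℂ}
    (hρ : ρ.IsHermitian) (hA : A.IsHermitian) : (ρ * A - A * ρ)ᴴ = -(ρ * A - A * ρ) := by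
  rw [conjTranspose_sub, conjTranspose_mul, conjTranspose_mul, hρ.eq, hA.eq, neg_sub]

lemma isHermitian_I_smul_of_conjTranspose_eq_neg {C : Matrix ι ι ℂ} (hC : Cᴴ = -C) :
    (Complex.I • C).IsHermitian := by
  rw [IsHermitian, conjTranspose_smul, hC, Complex.star_def, Complex.conj_I, smul_neg, neg_smul,
    neg_neg]

lemma conjTranspose_mul_self_of_conjTranspose_eq_neg [Fintype ι] {C : Matrix ι ι ℂ}
    (hC : Cᴴ = -C) : Cᴴ * C = (Complex.I • C) * (Complex.I • C) := by
  rw [hC, smul_mul_smul_comm, Complex.I_mul_I, neg_one_smul, neg_mul]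

end SkewHermitian

/-- lower bound on the trace norm of the commutator of a state with a Hermitian
observable: `‖[ρ,A]‖₁ ≥ 2 Σ_{(k,l)∈P} |a_k − a_l||ρ_{kl}|` for every collection `P` of
pairwise-disjoint index pairs, and in particular `‖[ρ,A]‖₁ ≥ 2|a_k − a_l||ρ_{kl}|` for all
`k, l`. -/
theorem commutator_trace_norm_lower_bound
    (n : ℕ) (ρ : Matrix (Fin n) (Fin n) ℂ) (hρ : IsDensityMatrix ρ)
    (A : Matrix (Fin n) (Fin n) ℂ) (hA : A.IsHermitian)
    (a : Fin n → ℝ) (v : Fin n → EuclideanSpace ℂ (Fin n))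
    (hv : Orthonormal ℂ v)
    (heig : ∀ k, Matrix.toEuclideanCLM (𝕜 := ℂ) A (v k) = (a k : ℂ) • v k) :
    (∀ P : Finset (Fin n × Fin n),
      (∀ p ∈ P, p.1 ≠ p.2) →
      (∀ p ∈ P, ∀ q ∈ P, p ≠ q → p.1 ≠ q.1 ∧ p.1 ≠ q.2 ∧ p.2 ≠ q.1 ∧ p.2 ≠ q.2) →
      2 * ∑ p ∈ P, |a p.1 - a p.2|
          * ‖⟪v p.1, Matrix.toEuclideanCLM (𝕜 := ℂ) ρ (v p.2)⟫_ℂ‖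
        ≤ traceNorm (ρ * A - A * ρ)) ∧
    ∀ k l : Fin n,
      2 * (|a k - a l| * ‖⟪v k, Matrix.toEuclideanCLM (𝕜 := ℂ) ρ (v l)⟫_ℂ‖)
        ≤ traceNorm (ρ * A - A * ρ) := by
  have hC := conjTranspose_commutator_of_isHermitian hρ.1.1 hA
  have hH := isHermitian_I_smul_of_conjTranspose_eq_neg hC
  have htrace :=
    traceNorm_eq_sum_abs_eigenvalues hH (conjTranspose_mul_self_of_conjTranspose_eq_neg hC)
  have hentry : ∀ k l, ‖⟪v k, toEuclideanCLM (𝕜 := ℂ) (Complex.I • (ρ * A - A * ρ)) (v l)⟫_ℂ‖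
      = |a k - a l| * ‖⟪v k, toEuclideanCLM (𝕜 := ℂ) ρ (v l)⟫_ℂ‖ := fun k l ↦ by
    rw [_root_.map_smul, _root_.smul_apply, inner_smul_right, norm_mul, Complex.norm_I, one_mul,
      inner_toEuclideanCLM_commutator_eq hA ρ heig, norm_mul, ← Complex.ofReal_sub,
      Complex.norm_real, Real.norm_eq_abs, abs_sub_comm]
  refine ⟨fun P hne hdisj ↦ ?_, fun k l ↦ ?_⟩
  · simpa only [htrace, hentry] using
      hH.two_mul_sum_norm_inner_pairs_le hv hne (pairwiseDisjoint_pair_of_ne hdisj)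
  rcases eq_or_ne k l with rfl | hkl
  · simp only [sub_self, abs_zero, zero_mul, mul_zero, htrace]
    positivity
  · simpa only [Finset.sum_singleton, htrace, hentry] using
      hH.two_mul_sum_norm_inner_pairs_le hv (P := {(k, l)}) (by simpa using hkl) (by simp)

end PQSM
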